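/- Let Ω ⊆ ℂ be open and let τ, ρ : Ω → ℝ be smooth with ρ > 0. Set ρ* := 1/ρ, τ* := τ − log ρ, and define μ := (2/ρ)(ρ_{zz} − 2 τ_z ρ_z) and μ* := (2/ρ*)((ρ*)_{zz} − 2 (τ*)_z (ρ*)_z). Then μ* = −μ identically on Ω. (In the duality between a Ribaucour surface and its dual, the Laguerre–Hopf functions are opposite; in particular the coordinate curves are curvature lines for one surface if and only if they are for the other, and 1/k₂ − 1/k₁ = −(1/k₂* − 1/k₁*).) -/

import Mathlib

/-!
Write `r` and `t` for the complexifications of `ρ` and `τ`. Since `ρ > 0`, on `Ω` we have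
`ρ* = r⁻¹` and `τ* = t - log r` with the principal complex logarithm, so the holomorphic
chain rule for `∂_z` gives `∂_z r⁻¹ = -r_z / r²`, `∂_z∂_z r⁻¹ = -r_zz / r² + 2 r_z² / r³` and
`∂_z(t - log r) = t_z - r_z / r`. Substituting, the terms `2 r_z² / r³` cancel and what
remains is `-(2 / r)(r_zz - 2 t_z r_z)`.
-/

/-- Wirtinger derivative `u_z = (u_x - i u_y)/2` of a complex-valued function on `ℂ`. -/
noncomputable def wdz (u : ℂ → ℂ) (z : ℂ) : ℂ :=
  (fderiv ℝ u z 1 - Complex.I * fderiv ℝ u z Complex.I) / 2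

/-- The complexification of a real-valued function on `ℂ`. -/
noncomputable def cof (u : ℂ → ℝ) : ℂ → ℂ := fun z => (u z : ℂ)

open Complex Filter Topology

section Wirtinger

variable {u v : ℂ → ℂ} {z : ℂ}

theorem Filter.EventuallyEq.wdz_eq (h : u =ᶠ[𝓝 z] v) : wdz u z = wdz v z := by
  rw [wdz, wdz, h.fderiv_eq]

theorem wdz_comp {g : ℂ → ℂ} {g' : ℂ} (hg : HasDerivAt g g' (u z))
    (hu : DifferentiableAt ℝ u z) : wdz (fun w => g (u w)) z = g' * wdz u z := by
  have hcomp : HasFDerivAt (fun w => g (u w))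
      ((ContinuousLinearMap.toSpanSingleton ℂ g').restrictScalars ℝ ∘L fderiv ℝ u z) z :=
    (hg.hasFDerivAt.restrictScalars ℝ).comp z hu.hasFDerivAt
  simp only [wdz, hcomp.fderiv, ContinuousLinearMap.comp_apply,
    ContinuousLinearMap.coe_restrictScalars', ContinuousLinearMap.toSpanSingleton_apply,
    smul_eq_mul]
  ring

theorem wdz_mul (hu : DifferentiableAt ℝ u z) (hv : DifferentiableAt ℝ v z) :
    wdz (fun w => u w * v w) z = wdz u z * v z + u z * wdz v z := by
  simp only [wdz, fderiv_fun_mul hu hv, add_apply, smul_apply, smul_eq_mul]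
  ring

theorem wdz_sub (hu : DifferentiableAt ℝ u z) (hv : DifferentiableAt ℝ v z) :
    wdz (fun w => u w - v w) z = wdz u z - wdz v z := by
  simp only [wdz, fderiv_fun_sub hu hv, sub_apply]
  ring

theorem ContDiffAt.differentiableAt_wdz (hu : ContDiffAt ℝ 2 u z) :
    DifferentiableAt ℝ (wdz u) z := by
  have hD : ContDiffAt ℝ 1 (fderiv ℝ u) z := hu.fderiv_right (by norm_num)
  have hwdz : ContDiffAt ℝ 1 (wdz u) z :=
    ((hD.clm_apply contDiffAt_const).sub
      (contDiffAt_const.mul (hD.clm_apply contDiffAt_const))).div_const 2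
  exact hwdz.differentiableAt one_ne_zero

theorem wdz_wdz_inv (hu : ContDiffAt ℝ 2 u z) (h0 : u z ≠ 0) :
    wdz (wdz fun w => (u w)⁻¹) z =
      2 * wdz u z ^ 2 / u z ^ 3 - wdz (wdz u) z / u z ^ 2 := by
  have hu1 : DifferentiableAt ℝ u z := hu.differentiableAt (by norm_num)
  have hfirst : wdz (fun w => (u w)⁻¹) =ᶠ[𝓝 z] fun w => -(u w ^ 2)⁻¹ * wdz u w := by
    filter_upwards [hu.eventually (by simp), hu.continuousAt.eventually_ne h0] with w hw hw0
    exact wdz_comp (hasDerivAt_inv hw0) (hw.differentiableAt (by norm_num))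
  have hcoeff : HasDerivAt (fun x : ℂ => -(x ^ 2)⁻¹) (2 / u z ^ 3) (u z) :=
    ((hasDerivAt_pow 2 (u z)).fun_inv (pow_ne_zero 2 h0)).fun_neg.congr_deriv
      (by field_simp; ring)
  have hcoeff_diff : DifferentiableAt ℝ (fun w => -(u w ^ 2)⁻¹) z :=
    ((hu1.pow 2).inv (pow_ne_zero 2 h0)).neg
  rw [hfirst.wdz_eq, wdz_mul hcoeff_diff hu.differentiableAt_wdz,
    wdz_comp hcoeff hu1]
  field_simp
  ring

end Wirtinger

noncomputable def laguerreHopf (r t : ℂ → ℂ) (z : ℂ) : ℂ :=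
  2 / r z * (wdz (wdz r) z - 2 * wdz t z * wdz r z)

theorem laguerreHopf_congr {r r' t t' : ℂ → ℂ} {z : ℂ} (hr : r =ᶠ[𝓝 z] r')
    (ht : t =ᶠ[𝓝 z] t') : laguerreHopf r t z = laguerreHopf r' t' z := by
  have hrz : wdz r =ᶠ[𝓝 z] wdz r' := hr.eventuallyEq_nhds.mono fun _ h => h.wdz_eq
  rw [laguerreHopf, laguerreHopf, hr.eq_of_nhds, hr.wdz_eq, ht.wdz_eq, hrz.wdz_eq]

theorem laguerreHopf_inv_sub_log {r t : ℂ → ℂ} {z : ℂ} (hr : ContDiffAt ℝ 2 r z)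
    (ht : DifferentiableAt ℝ t z) (hslit : r z ∈ slitPlane) :
    laguerreHopf (fun w => (r w)⁻¹) (fun w => t w - log (r w)) z = -laguerreHopf r t z := by
  have hr0 : r z ≠ 0 := slitPlane_ne_zero hslit
  have hr1 : DifferentiableAt ℝ r z := hr.differentiableAt (by norm_num)
  have hlog : DifferentiableAt ℝ (fun w => log (r w)) z :=
    ((hasDerivAt_log hslit).differentiableAt.restrictScalars ℝ).comp z hr1
  rw [laguerreHopf, laguerreHopf, wdz_wdz_inv hr hr0, wdz_sub ht hlog,
    wdz_comp (hasDerivAt_log hslit) hr1, wdz_comp (hasDerivAt_inv hr0) hr1]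
  field_simp
  ring

/-- for smooth `τ`, `ρ` with `ρ > 0` on the open set `Ω`, with dual data
`ρ* = 1/ρ`, `τ* = τ - log ρ`, the Laguerre-Hopf functions
`μ = (2/ρ)(ρ_{zz} - 2τ_zρ_z)` and `μ* = (2/ρ*)((ρ*)_{zz} - 2(τ*)_z(ρ*)_z)` satisfy
`μ* = -μ` on `Ω`. -/
theorem dual_laguerre_hopf_function_is_opposite
    (Ω : Set ℂ) (hΩ : IsOpen Ω) (τ ρ : ℂ → ℝ)
    (hτ : ContDiffOn ℝ (⊤ : ℕ∞) τ Ω) (hρ : ContDiffOn ℝ (⊤ : ℕ∞) ρ Ω)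
    (hρpos : ∀ z ∈ Ω, 0 < ρ z)
    (ρs τs : ℂ → ℝ)
    (hρs : ∀ z ∈ Ω, ρs z = 1 / ρ z)
    (hτs : ∀ z ∈ Ω, τs z = τ z - Real.log (ρ z))
    (μ μs : ℂ → ℂ)
    (hμ : ∀ z ∈ Ω, μ z =
      2 / (ρ z : ℂ) * (wdz (wdz (cof ρ)) z - 2 * wdz (cof τ) z * wdz (cof ρ) z))
    (hμs : ∀ z ∈ Ω, μs z =
      2 / (ρs z : ℂ) * (wdz (wdz (cof ρs)) z - 2 * wdz (cof τs) z * wdz (cof ρs) z)) :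
    ∀ z ∈ Ω, μs z = -μ z := by
  intro z hz
  have hΩz : Ω ∈ 𝓝 z := hΩ.mem_nhds hz
  have hr : ContDiffAt ℝ 2 (cof ρ) z :=
    (ofRealCLM.contDiff.comp_contDiffAt z (hρ.contDiffAt hΩz)).of_le (WithTop.coe_le_coe.2 le_top)
  have ht : DifferentiableAt ℝ (cof τ) z :=
    ofRealCLM.differentiableAt.comp z ((hτ.contDiffAt hΩz).differentiableAt (by simp))
  have hρs' : cof ρs =ᶠ[𝓝 z] fun w => (cof ρ w)⁻¹ :=
    eventually_of_mem hΩz fun w hw => by simp [cof, hρs w hw]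
  have hτs' : cof τs =ᶠ[𝓝 z] fun w => cof τ w - log (cof ρ w) :=
    eventually_of_mem hΩz fun w hw => by simp [cof, hτs w hw, ofReal_log (hρpos w hw).le]
  rw [hμs z hz, hμ z hz]
  change laguerreHopf (cof ρs) (cof τs) z = -laguerreHopf (cof ρ) (cof τ) z
  rw [laguerreHopf_congr hρs' hτs']
  exact laguerreHopf_inv_sub_log hr ht (ofReal_mem_slitPlane.2 (hρpos z hz))
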